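/- Under the assumptions of the previous Taylor remainder bounds, if X^{(n)} ~ N(μ^{(n)}, Σ^{(n)}) with μ^{(n)} ∈ B(μ, ε/2) and the eigenvalues of a^{(n)} Σ^{(n)} bounded above and below in (0, ∞) with a^{(n)} → ∞, then the rescaled remainder satisfies E[(√a^{(n)} R₁^{(n)}(X^{(n)}))²] ≤ C/a^{(n)} for a constant C independent of n, where R₁^{(n)} is the first-order Taylor remainder of f at μ^{(n)}; consequently Var(E[√a^{(n)} R₁^{(n)}(X^{(n)}) | X_u^{(n)}]) ≤ C/a^{(n)} for every subset u. -/

import Mathlib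

/-!
Inside the ball of radius `ε/2` around `μ⁽ⁿ⁾` the remainder is `O(‖x - μ⁽ⁿ⁾‖²)`, outside it is
`O(‖x - μ⁽ⁿ⁾‖ᵏ)`; with `k ≥ 2` and `a⁽ⁿ⁾ ≥ a₀ := minₙ a⁽ⁿ⁾ > 0` both cases give
`a R² ≤ (C₁² (a‖x - μ‖²)² + C₂² a₀^(2-k) (a‖x - μ‖²)ᵏ) / a`. Each coordinate of `√a (X - μ)` is a
centred Gaussian of variance `a Σᵢᵢ ≤ lmax`, so by scaling and the power-mean inequality the moments
of `a‖X - μ‖²` are bounded uniformly in `n` by standard normal moments. The bound on the variance of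
the conditional expectation then follows from the law of total variance.
-/

open MeasureTheory ProbabilityTheory Filter

/-- The sub-σ-algebra generated by the subvector `(X i)_{i ∈ u}`. -/
noncomputable def subSigma {Ω : Type*} [MeasurableSpace Ω] {p : ℕ}
    (X : Ω → EuclideanSpace ℝ (Fin p)) (u : Finset (Fin p)) : MeasurableSpace Ω :=
  MeasurableSpace.comap (fun ω => (fun i : u => X ω i)) inferInstance

/-- `X` is a Gaussian vector with mean `m` and covariance `S`:
every linear form of `X` has the corresponding one-dimensional Gaussian law. -/
def IsGaussianVec {Ω : Type*} [MeasurableSpace Ω] {p : ℕ} (P : Measure Ω)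
    (X : Ω → EuclideanSpace ℝ (Fin p)) (m : Fin p → ℝ)
    (S : Matrix (Fin p) (Fin p) ℝ) : Prop :=
  ∀ c : Fin p → ℝ,
    Measure.map (fun ω => ∑ i, c i * X ω i) P =
      gaussianReal (∑ i, c i * m i) (Real.toNNReal (∑ i, ∑ j, c i * S i j * c j))

open scoped NNReal

lemma integral_pow_gaussianReal_zero (v : ℝ≥0) (n : ℕ) :
    ∫ x, x ^ n ∂gaussianReal 0 v = √(v : ℝ) ^ n * ∫ x, x ^ n ∂gaussianReal 0 1 := by
  have hscale : (gaussianReal 0 1).map (√(v : ℝ) * ·) = gaussianReal 0 v := by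
    rw [gaussianReal_map_const_mul, mul_zero, mul_one]
    congr
    exact Real.sq_sqrt v.coe_nonneg
  rw [← hscale, integral_map (by fun_prop) (by fun_prop)]
  simp_rw [mul_pow, integral_const_mul]

lemma ProbabilityTheory.HasLaw.integrable_pow_of_gaussianReal {Ω : Type*} [MeasurableSpace Ω]
    {P : Measure Ω} {Y : Ω → ℝ} {c : ℝ} {v : ℝ≥0} (hY : HasLaw Y (gaussianReal c v) P) (n : ℕ) :
    Integrable (fun ω => Y ω ^ n) P := by
  have h : Integrable (fun x : ℝ => x ^ n) (gaussianReal c v) :=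
    integrable_pow_of_mem_interior_integrableExpSet (X := id) (by simp) n
  rw [← hY.map_eq] at h
  exact (integrable_map_measure (measurable_id.pow_const n).aestronglyMeasurable
    hY.aemeasurable).mp h

lemma IsGaussianVec.hasLaw_sub_apply {Ω : Type*} [MeasurableSpace Ω] {P : Measure Ω} {p : ℕ}
    {X : Ω → EuclideanSpace ℝ (Fin p)} {m : Fin p → ℝ} {S : Matrix (Fin p) (Fin p) ℝ}
    (hG : IsGaussianVec P X m S) (hX : Measurable X) (i : Fin p) :
    HasLaw (fun ω => X ω i - m i) (gaussianReal 0 (S i i).toNNReal) P := by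
  have hXi : HasLaw (fun ω => X ω i) (gaussianReal (m i) (S i i).toNNReal) P :=
    ⟨by fun_prop, by simpa [Pi.single_apply] using hG (Pi.single i 1)⟩
  simpa using gaussianReal_sub_const hXi (m i)

noncomputable def gaussianNormSqMomentBound (p : ℕ) (lmax : ℝ) (j : ℕ) : ℝ :=
  (p * lmax) ^ j * ∫ x, x ^ (2 * j) ∂gaussianReal 0 1

lemma IsGaussianVec.integral_mul_norm_sub_sq_pow_le {Ω : Type*} [MeasurableSpace Ω]
    {P : Measure Ω} {p : ℕ} {X : Ω → EuclideanSpace ℝ (Fin p)} {m : EuclideanSpace ℝ (Fin p)}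
    {S : Matrix (Fin p) (Fin p) ℝ} (hG : IsGaussianVec P X (fun i => m i) S)
    (hX : Measurable X) {a lmax : ℝ} (ha : 0 ≤ a) (hS : ∀ i, 0 ≤ S i i ∧ a * S i i ≤ lmax)
    {j : ℕ} (hj : j ≠ 0) :
    Integrable (fun ω => (a * ‖X ω - m‖ ^ 2) ^ j) P ∧
      ∫ ω, (a * ‖X ω - m‖ ^ 2) ^ j ∂P ≤ gaussianNormSqMomentBound p lmax j := by
  obtain ⟨j, rfl⟩ := Nat.exists_eq_succ_of_ne_zero hj
  rw [gaussianNormSqMomentBound]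
  set M := ∫ x, x ^ (2 * (j + 1)) ∂gaussianReal 0 1
  have hM : 0 ≤ M := integral_nonneg fun x => (even_two_mul _).pow_nonneg x
  have hY := hG.hasLaw_sub_apply hX
  have hmoment (i : Fin p) : ∫ ω, (X ω i - m i) ^ (2 * (j + 1)) ∂P = S i i ^ (j + 1) * M := by
    rw [← Function.comp_def (· ^ (2 * (j + 1))),
      (hY i).integral_comp (f := (· ^ (2 * (j + 1)))) (by fun_prop),
      integral_pow_gaussianReal_zero, Real.coe_toNNReal _ (hS i).1, pow_mul,
      Real.sq_sqrt (hS i).1]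
  have hdom : Integrable (fun ω => a ^ (j + 1) * ((p : ℝ) ^ j *
      ∑ i, (X ω i - m i) ^ (2 * (j + 1)))) P :=
    ((integrable_finsetSum _ fun i _ =>
      (hY i).integrable_pow_of_gaussianReal _).const_mul _).const_mul _
  have hpt (ω : Ω) : (a * ‖X ω - m‖ ^ 2) ^ (j + 1)
      ≤ a ^ (j + 1) * ((p : ℝ) ^ j * ∑ i, (X ω i - m i) ^ (2 * (j + 1))) := by
    rw [mul_pow, EuclideanSpace.norm_sq_eq]
    gcongr
    calc (∑ i, ‖(X ω - m) i‖ ^ 2) ^ (j + 1)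
        ≤ (Finset.univ.card : ℝ) ^ j * ∑ i, (‖(X ω - m) i‖ ^ 2) ^ (j + 1) :=
          pow_sum_le_card_mul_sum_pow (fun i _ => sq_nonneg _) j
      _ = (p : ℝ) ^ j * ∑ i, (X ω i - m i) ^ (2 * (j + 1)) := by
          simp [pow_mul]
  have hint : Integrable (fun ω => (a * ‖X ω - m‖ ^ 2) ^ (j + 1)) P :=
    hdom.mono' (by fun_prop) (ae_of_all _ fun ω => by
      rw [Real.norm_of_nonneg (by positivity)]
      exact hpt ω)
  refine ⟨hint, ?_⟩
  calc ∫ ω, (a * ‖X ω - m‖ ^ 2) ^ (j + 1) ∂P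
      ≤ ∫ ω, a ^ (j + 1) * ((p : ℝ) ^ j * ∑ i, (X ω i - m i) ^ (2 * (j + 1))) ∂P :=
        integral_mono hint hdom hpt
    _ = (p : ℝ) ^ j * ∑ i, (a * S i i) ^ (j + 1) * M := by
        rw [integral_const_mul, integral_const_mul, integral_finsetSum _ fun i _ =>
          (hY i).integrable_pow_of_gaussianReal _]
        simp_rw [hmoment, Finset.mul_sum]
        exact Finset.sum_congr rfl fun i _ => by ring
    _ ≤ (p : ℝ) ^ j * ∑ _i : Fin p, lmax ^ (j + 1) * M := by
        gcongr with i
        exacts [mul_nonneg ha (hS i).1, (hS i).2]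
    _ = (p * lmax) ^ (j + 1) * M := by
        simp only [Finset.sum_const, Finset.card_univ, Fintype.card_fin, nsmul_eq_mul]
        ring

lemma sq_sqrt_mul_le_of_abs_le {a a₀ d r C₁ C₂ : ℝ} {k : ℕ} (hk : 2 ≤ k) (ha₀ : 0 < a₀)
    (ha : a₀ ≤ a) (hr : |r| ≤ C₁ * d ^ 2 ∨ |r| ≤ C₂ * d ^ k) :
    (√a * r) ^ 2 ≤ (C₁ ^ 2 * (a * d ^ 2) ^ 2 + C₂ ^ 2 * a₀⁻¹ ^ (k - 2) * (a * d ^ 2) ^ k) / a := by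
  have ha0 : 0 < a := ha₀.trans_le ha
  rw [mul_pow, Real.sq_sqrt ha0.le, le_div_iff₀ ha0]
  rcases hr.imp (fun h => pow_le_pow_left₀ (abs_nonneg r) h 2)
    (fun h => pow_le_pow_left₀ (abs_nonneg r) h 2) with hr | hr <;> rw [sq_abs] at hr
  · have hfar : 0 ≤ C₂ ^ 2 * a₀⁻¹ ^ (k - 2) * (a * d ^ 2) ^ k := by positivity
    calc a * r ^ 2 * a = a ^ 2 * r ^ 2 := by ring
      _ ≤ a ^ 2 * (C₁ * d ^ 2) ^ 2 := by gcongr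
      _ = C₁ ^ 2 * (a * d ^ 2) ^ 2 := by ring
      _ ≤ _ := le_add_of_nonneg_right hfar
  · have hgrowth : 1 ≤ a₀⁻¹ ^ (k - 2) * a ^ (k - 2) := by
      rw [← mul_pow]
      exact one_le_pow₀ (by rw [inv_mul_eq_div, one_le_div ha₀]; exact ha)
    have hnear : 0 ≤ C₁ ^ 2 * (a * d ^ 2) ^ 2 := by positivity
    calc a * r ^ 2 * a = a ^ 2 * r ^ 2 := by ring
      _ ≤ a ^ 2 * (C₂ * d ^ k) ^ 2 := by gcongr
      _ = 1 * (C₂ ^ 2 * a ^ 2 * (d ^ 2) ^ k) := by ring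
      _ ≤ a₀⁻¹ ^ (k - 2) * a ^ (k - 2) * (C₂ ^ 2 * a ^ 2 * (d ^ 2) ^ k) := by gcongr
      _ = C₂ ^ 2 * a₀⁻¹ ^ (k - 2) * (a * d ^ 2) ^ k := by
        rw [mul_pow a, ← pow_mul, mul_comm 2 k, pow_mul,
          show a ^ k = a ^ (k - 2) * a ^ 2 by rw [← pow_add, Nat.sub_add_cancel hk]]
        ring
      _ ≤ _ := le_add_of_nonneg_left hnear

lemma IsGaussianVec.memLp_and_integral_sq_sqrt_mul_le {Ω : Type*} [MeasurableSpace Ω]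
    {P : Measure Ω} {p : ℕ} {X : Ω → EuclideanSpace ℝ (Fin p)} {m : EuclideanSpace ℝ (Fin p)}
    {S : Matrix (Fin p) (Fin p) ℝ} (hG : IsGaussianVec P X (fun i => m i) S)
    (hX : Measurable X) {a a₀ lmax : ℝ} (ha₀ : 0 < a₀) (ha : a₀ ≤ a)
    (hS : ∀ i, 0 ≤ S i i ∧ a * S i i ≤ lmax) {R : EuclideanSpace ℝ (Fin p) → ℝ}
    (hR : Measurable R) {C₁ C₂ : ℝ} {k : ℕ} (hk : 2 ≤ k)
    (hRle : ∀ x, |R x| ≤ C₁ * ‖x - m‖ ^ 2 ∨ |R x| ≤ C₂ * ‖x - m‖ ^ k) :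
    MemLp (fun ω => √a * R (X ω)) 2 P ∧
      ∫ ω, (√a * R (X ω)) ^ 2 ∂P ≤ (C₁ ^ 2 * gaussianNormSqMomentBound p lmax 2
        + C₂ ^ 2 * a₀⁻¹ ^ (k - 2) * gaussianNormSqMomentBound p lmax k) / a := by
  have ha0 : 0 < a := ha₀.trans_le ha
  obtain ⟨hint₂, hmom₂⟩ := hG.integral_mul_norm_sub_sq_pow_le hX ha0.le hS two_ne_zero
  obtain ⟨hintₖ, hmomₖ⟩ := hG.integral_mul_norm_sub_sq_pow_le hX ha0.le hS (j := k) (by omega)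
  have hpt (ω : Ω) := sq_sqrt_mul_le_of_abs_le hk ha₀ ha (hRle (X ω))
  have hdom := ((hint₂.const_mul (C₁ ^ 2)).add
    (hintₖ.const_mul (C₂ ^ 2 * a₀⁻¹ ^ (k - 2)))).div_const a
  have hmeas : AEStronglyMeasurable (fun ω => √a * R (X ω)) P :=
    ((hR.comp hX).const_mul _).aestronglyMeasurable
  have hsq : Integrable (fun ω => (√a * R (X ω)) ^ 2) P :=
    hdom.mono' (hmeas.pow 2) (ae_of_all _ fun ω => by
      rw [Real.norm_of_nonneg (sq_nonneg _)]
      exact hpt ω)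
  refine ⟨(memLp_two_iff_integrable_sq hmeas).2 hsq, ?_⟩
  calc ∫ ω, (√a * R (X ω)) ^ 2 ∂P
      ≤ ∫ ω, (C₁ ^ 2 * (a * ‖X ω - m‖ ^ 2) ^ 2
          + C₂ ^ 2 * a₀⁻¹ ^ (k - 2) * (a * ‖X ω - m‖ ^ 2) ^ k) / a ∂P :=
        integral_mono hsq hdom hpt
    _ = (C₁ ^ 2 * ∫ ω, (a * ‖X ω - m‖ ^ 2) ^ 2 ∂P
          + C₂ ^ 2 * a₀⁻¹ ^ (k - 2) * ∫ ω, (a * ‖X ω - m‖ ^ 2) ^ k ∂P) / a := by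
        rw [integral_div, integral_add (hint₂.const_mul _) (hintₖ.const_mul _),
          integral_const_mul, integral_const_mul]
    _ ≤ _ := by gcongr

lemma subSigma_le {Ω : Type*} [mΩ : MeasurableSpace Ω] {p : ℕ}
    {X : Ω → EuclideanSpace ℝ (Fin p)} (hX : Measurable X) (u : Finset (Fin p)) :
    subSigma X u ≤ mΩ :=
  Measurable.comap_le (by fun_prop)

lemma variance_condExp_le_integral_sq {Ω : Type*} {m m₀ : MeasurableSpace Ω} {μ : Measure Ω}
    [IsProbabilityMeasure μ] (hm : m ≤ m₀) {X : Ω → ℝ} (hX : MemLp X 2 μ) :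
    Var[μ[X | m]; μ] ≤ ∫ ω, X ω ^ 2 ∂μ := by
  have hcondVar : 0 ≤ μ[Var[X; μ | m]] :=
    integral_nonneg_of_ae (condExp_nonneg (ae_of_all _ fun ω => sq_nonneg _))
  calc Var[μ[X | m]; μ] ≤ Var[X; μ] := by
        linarith [integral_condVar_add_variance_condExp hm hX]
    _ ≤ ∫ ω, X ω ^ 2 ∂μ := variance_le_expectation_sq hX.aestronglyMeasurable

theorem stmt8_general {Ω : Type*} [MeasurableSpace Ω] (P : Measure Ω) [IsProbabilityMeasure P]
    {p : ℕ} (ε : ℝ)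
    (k : ℕ) (hk : 2 ≤ k)
    (X : ℕ → Ω → EuclideanSpace ℝ (Fin p)) (hX : ∀ n, Measurable (X n))
    (μn : ℕ → EuclideanSpace ℝ (Fin p)) (Sn : ℕ → Matrix (Fin p) (Fin p) ℝ)
    (a : ℕ → ℝ) (ha : ∀ n, 0 < a n)
    (hatop : Filter.Tendsto a Filter.atTop Filter.atTop)
    (lmin lmax : ℝ) (hl : 0 < lmin)
    (heig : ∀ n (v : EuclideanSpace ℝ (Fin p)),
      lmin * ‖v‖ ^ 2 ≤ a n * ∑ i, ∑ j, v i * Sn n i j * v j ∧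
      a n * ∑ i, ∑ j, v i * Sn n i j * v j ≤ lmax * ‖v‖ ^ 2)
    (hGauss : ∀ n, IsGaussianVec P (X n) (fun i => μn n i) (Sn n))
    (R : ℕ → EuclideanSpace ℝ (Fin p) → ℝ) (hR : ∀ n, Measurable (R n))
    (C₁ C₂ : ℝ)
    (hR1 : ∀ n x, ‖x - μn n‖ ≤ ε / 2 → |R n x| ≤ C₁ * ‖x - μn n‖ ^ 2)
    (hR2 : ∀ n x, ε / 2 < ‖x - μn n‖ → |R n x| ≤ C₂ * ‖x - μn n‖ ^ k) :
    ∃ C : ℝ, ∀ n,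
      (∫ ω, (Real.sqrt (a n) * R n (X n ω)) ^ 2 ∂P) ≤ C / a n ∧
      ∀ u : Finset (Fin p),
        variance (P[fun ω => Real.sqrt (a n) * R n (X n ω) | subSigma (X n) u]) P
          ≤ C / a n := by
  obtain ⟨n₀, hn₀⟩ := (Nat.cofinite_eq_atTop ▸ hatop : Tendsto a cofinite atTop).exists_forall_le
  refine ⟨C₁ ^ 2 * gaussianNormSqMomentBound p lmax 2
    + C₂ ^ 2 * (a n₀)⁻¹ ^ (k - 2) * gaussianNormSqMomentBound p lmax k, fun n => ?_⟩
  have hdiag (i : Fin p) : 0 ≤ Sn n i i ∧ a n * Sn n i i ≤ lmax := by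
    obtain ⟨hlow, hup⟩ : lmin ≤ a n * Sn n i i ∧ a n * Sn n i i ≤ lmax := by
      simpa [PiLp.norm_single] using heig n (EuclideanSpace.single i 1)
    exact ⟨(pos_of_mul_pos_right (hl.trans_le hlow) (ha n).le).le, hup⟩
  obtain ⟨hL2, hsq⟩ := (hGauss n).memLp_and_integral_sq_sqrt_mul_le (hX n) (ha n₀) (hn₀ n)
    hdiag (hR n) hk fun x => (le_or_gt _ _).imp (hR1 n x) (hR2 n x)
  exact ⟨hsq, fun u => (variance_condExp_le_integral_sq (subSigma_le (hX n) u) hL2).trans hsq⟩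

/-- For Gaussian `X⁽ⁿ⁾ ~ N(μ⁽ⁿ⁾, Σ⁽ⁿ⁾)` with `μ⁽ⁿ⁾ ∈ B(μ, ε/2)` and eigenvalues of
`a⁽ⁿ⁾Σ⁽ⁿ⁾` bounded in `(0,∞)`, the rescaled Taylor remainder satisfies
`E[(√a⁽ⁿ⁾ R₁⁽ⁿ⁾(X⁽ⁿ⁾))²] ≤ C/a⁽ⁿ⁾` and hence
`Var(E[√a⁽ⁿ⁾ R₁⁽ⁿ⁾(X⁽ⁿ⁾) | X_u⁽ⁿ⁾]) ≤ C/a⁽ⁿ⁾` for every `u`, with `C` independent of `n`. -/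
theorem stmt8 {Ω : Type*} [MeasurableSpace Ω] (P : Measure Ω) [IsProbabilityMeasure P]
    {p : ℕ} (μ : EuclideanSpace ℝ (Fin p)) (ε : ℝ) (hε : 0 < ε)
    (k : ℕ) (hk : 2 ≤ k)
    (X : ℕ → Ω → EuclideanSpace ℝ (Fin p)) (hX : ∀ n, Measurable (X n))
    (μn : ℕ → EuclideanSpace ℝ (Fin p)) (Sn : ℕ → Matrix (Fin p) (Fin p) ℝ)
    (a : ℕ → ℝ) (ha : ∀ n, 0 < a n)
    (hatop : Filter.Tendsto a Filter.atTop Filter.atTop)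
    (hμn : ∀ n, μn n ∈ Metric.ball μ (ε / 2))
    (lmin lmax : ℝ) (hl : 0 < lmin)
    (heig : ∀ n (v : EuclideanSpace ℝ (Fin p)),
      lmin * ‖v‖ ^ 2 ≤ a n * ∑ i, ∑ j, v i * Sn n i j * v j ∧
      a n * ∑ i, ∑ j, v i * Sn n i j * v j ≤ lmax * ‖v‖ ^ 2)
    (hGauss : ∀ n, IsGaussianVec P (X n) (fun i => μn n i) (Sn n))
    (R : ℕ → EuclideanSpace ℝ (Fin p) → ℝ) (hR : ∀ n, Measurable (R n))
    (C₁ C₂ : ℝ)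
    (hR1 : ∀ n x, ‖x - μn n‖ ≤ ε / 2 → |R n x| ≤ C₁ * ‖x - μn n‖ ^ 2)
    (hR2 : ∀ n x, ε / 2 < ‖x - μn n‖ → |R n x| ≤ C₂ * ‖x - μn n‖ ^ k) :
    ∃ C : ℝ, ∀ n,
      (∫ ω, (Real.sqrt (a n) * R n (X n ω)) ^ 2 ∂P) ≤ C / a n ∧
      ∀ u : Finset (Fin p),
        variance (P[fun ω => Real.sqrt (a n) * R n (X n ω) | subSigma (X n) u]) P
          ≤ C / a n :=
  stmt8_general P ε k hk X hX μn Sn a ha hatop lmin lmax hl heig hGauss R hR C₁ C₂ hR1 hR2
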